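/- For every integer r ≥ 0, every real λ > −1/2 and every θ ∈ ℝ, writing t = cos θ, one has t · Σ_{s=0}^{r} (−1)^s · binom(r,s) · ((λ+r+1)_s/(λ+1/2)_s) · (1−t²)^s = Σ_{s=0}^{r} b_s^r(λ) · cos((2r+1−2s)θ), where b_s^r(λ) = (2r+2−s)_s · (λ)_s · (λ+r+1)_{r−s} / (4^r · (λ+1/2)_r · s!). (This decomposes the normalized Gegenbauer polynomial P_{2r+1}^{(λ−1/2)} in terms of Chebyshev polynomials of the first kind.) -/

import Mathlib

open Real Finset

/-- Pochhammer symbol (z)_n = z(z+1)...(z+n-1), with (z)_0 = 1. -/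
noncomputable def poch (z : ℝ) (n : ℕ) : ℝ := ∏ i ∈ Finset.range n, (z + i)

lemma poch_zero (z : ℝ) : poch z 0 = 1 := by simp [poch]

lemma poch_succ (z : ℝ) (n : ℕ) : poch z (n+1) = poch z n * (z + n) :=
  Finset.prod_range_succ _ _

lemma poch_one (z : ℝ) : poch z 1 = z := by simp [poch]

lemma poch_succ_left (z : ℝ) (n : ℕ) : poch z (n+1) = z * poch (z+1) n := by
  rw [poch, Finset.prod_range_succ']
  simp only [poch]
  rw [mul_comm]
  congr 1
  · simp
  · apply Finset.prod_congr rfl; intro i _; push_cast; ring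

lemma poch_add (z : ℝ) (m n : ℕ) : poch z (m+n) = poch z m * poch (z+m) n := by
  induction n with
  | zero => simp [poch_zero]
  | succ n ih => rw [← Nat.add_assoc, poch_succ, ih, poch_succ]; push_cast; ring

lemma poch_pos {z : ℝ} (hz : 0 < z) (n : ℕ) : 0 < poch z n := by
  apply Finset.prod_pos; intro i _; positivity

lemma poch_reflect (n : ℕ) (z : ℝ) : poch z n = (-1)^n * poch (-z - n + 1) n := by
  induction n generalizing z with
  | zero => simp [poch_zero]
  | succ n ih =>
    rw [poch_succ, ih, poch_succ_left]
    push_cast; ring_nf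

/-- summand of the Pfaff–Saalschütz polynomial identity -/
noncomputable def psF (a b c : ℝ) (n m : ℕ) : ℝ :=
  (n.choose m : ℝ) * poch a m * poch b m * poch (c+m) (n-m) * poch (c-a-b) (n-m)

/-- WZ certificate for Pfaff–Saalschütz -/
noncomputable def psH (a b c : ℝ) (n m : ℕ) : ℝ :=
  if m = 0 then 0 else if m ≤ n then
    -((c+m-1)*((c-a-b)+n-m) * (n.choose (m-1) : ℝ) * poch a m * poch b m *
      poch (c+m) (n-m) * poch (c-a-b) (n-m))
  else if m = n+1 then -(poch a (n+1) * poch b (n+1)) else 0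


lemma psH_zero (a b c : ℝ) (n : ℕ) : psH a b c n 0 = 0 := by simp [psH]

lemma psH_mid (a b c : ℝ) (n m : ℕ) (h : m+1 ≤ n) :
    psH a b c n (m+1) =
      -((c+((m+1:ℕ):ℝ)-1)*((c-a-b)+(n:ℝ)-((m+1:ℕ):ℝ)) * (n.choose m : ℝ) *
        poch a (m+1) * poch b (m+1) * poch (c+((m+1:ℕ):ℝ)) (n-(m+1)) *
        poch (c-a-b) (n-(m+1))) := by
  simp only [psH]
  rw [if_neg (by omega), if_pos h, Nat.add_sub_cancel]

lemma psH_top (a b c : ℝ) (n : ℕ) : psH a b c n (n+1) = -(poch a (n+1) * poch b (n+1)) := by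
  simp only [psH]
  rw [if_neg (by omega), if_neg (by omega)]
  simp

lemma psH_beyond (a b c : ℝ) (n m : ℕ) (h : n+1 < m) : psH a b c n m = 0 := by
  simp only [psH]
  rw [if_neg (by omega), if_neg (by omega), if_neg (by omega)]

lemma ps_cert (a b c : ℝ) (n : ℕ) (hn : 1 ≤ n) (m : ℕ) (hm : m ≤ n+1) :
    psF a b c (n+1) m - (c-a+n)*(c-b+n) * psF a b c n m
      = psH a b c n (m+1) - psH a b c n m := by
  obtain ⟨n', rfl⟩ : ∃ n', n = n'+1 := ⟨n-1, by omega⟩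
  rcases m with _ | m
  · -- m = 0
    have h0 : psH a b c (n'+1) 0 = 0 := by simp [psH]
    have h1 : psH a b c (n'+1) 1 =
        -((c+(1:ℕ)-1)*((c-a-b)+((n'+1):ℕ)-(1:ℕ)) * (((n'+1).choose 0 : ℕ) : ℝ) *
          poch a 1 * poch b 1 * poch (c+(1:ℕ)) ((n'+1)-1) * poch (c-a-b) ((n'+1)-1)) := by
      simp only [psH]
      rw [if_neg (by omega), if_pos (by omega)]
    rw [h0, h1]
    simp only [psF, Nat.choose_zero_right, Nat.sub_zero, Nat.add_sub_cancel,
      Nat.cast_zero, Nat.cast_one, add_zero]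
    rw [poch_succ (c) (n'+1), poch_succ (c-a-b) (n'+1),
        poch_succ_left c n', poch_succ (c-a-b) n', poch_one a, poch_one b,
        ]
    push_cast
    simp only [poch_zero]
    ring
  · -- m = m'+1
    rcases Nat.lt_or_ge (m+1) (n'+1) with hlt | hge
    · -- generic case: m+1 ≤ n'
      obtain ⟨q, rfl⟩ : ∃ q, n' = m+1+q := ⟨n'-(m+1), by omega⟩
      have e1 : m+1+q+1+1 - (m+1) = q+2 := by omega
      have e2 : m+1+q+1 - (m+1) = q+1 := by omega
      have e3 : m+1+q+1 - (m+1+1) = q := by omega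
      rw [psH_mid a b c _ m (by omega), psH_mid a b c _ (m+1) (by omega)]
      simp only [psF, e1, e2, e3]
      rw [show (m+1+q+1+1).choose (m+1) = (m+1+q+1).choose m + (m+1+q+1).choose (m+1) from
        Nat.choose_succ_succ _ _, Nat.cast_add]
      have rel : ((m+1+q+1).choose (m+1) : ℝ) * (m+1) = ((m+1+q+1).choose m : ℝ) * (q+2) := by
        have := Nat.choose_succ_right_eq (m+1+q+1) m
        have e4 : m+1+q+1 - m = q+2 := by omega
        rw [e4] at this
        exact_mod_cast congrArg (Nat.cast : ℕ → ℝ) this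
      rw [poch_succ_left (c+((m+1:ℕ):ℝ)) (q+1), poch_succ (c+((m+1:ℕ):ℝ)+1) q,
          poch_succ (c-a-b) (q+1), poch_succ (c-a-b) q,
          poch_succ_left (c+((m+1:ℕ):ℝ)) q,
          poch_succ a (m+1), poch_succ b (m+1)]
      push_cast
      have harg : c + (↑m+1+1) = c + (↑m+1) + 1 := by ring
      rw [harg]
      linear_combination (-(poch a (m+1) * poch b (m+1) * poch (c+((m:ℝ)+1)+1) q *
        poch (c-a-b) q * (c+((m:ℝ)+1)) * ((c-a-b)+(q:ℝ)) * ((c-a-b)+(q:ℝ)+1))) * rel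
    · rcases Nat.lt_or_ge (m+1) (n'+2) with hlt2 | hge2
      · -- m+1 = n'+1, i.e. m = n'
        have hm' : m = n' := by omega
        subst hm'
        rw [psH_mid a b c _ m (by omega), psH_top a b c (m+1)]
        simp only [psF]
        have e1 : m+1+1 - (m+1) = 1 := by omega
        have e2 : m+1 - (m+1) = 0 := by omega
        rw [e1, e2]
        rw [Nat.choose_succ_self_right (m+1), Nat.choose_succ_self_right m, Nat.choose_self]
        rw [poch_one, poch_one, poch_zero, poch_zero,
            poch_succ a (m+1), poch_succ b (m+1)]
        push_cast
        ring
      · -- m+1 = n'+2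
        have hm' : m = n'+1 := by omega
        subst hm'
        rw [psH_top a b c (n'+1), psH_beyond a b c (n'+1) (n'+1+1+1) (by omega)]
        simp only [psF]
        have e1 : n'+1+1 - (n'+1+1) = 0 := by omega
        rw [e1, Nat.choose_self, Nat.choose_succ_self, poch_zero]
        push_cast
        simp only [poch_zero]
        ring

theorem ps_sum (a b c : ℝ) (n : ℕ) :
    ∑ m ∈ range (n+1), psF a b c n m = poch (c-a) n * poch (c-b) n := by
  induction n with
  | zero => simp [psF, poch_zero]
  | succ n ih =>
    rcases n with _ | n'
    · rw [Finset.sum_range_succ, Finset.sum_range_one]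
      simp [psF, poch_one, poch_zero]
      ring
    · set n := n'+1 with hn
      have key : ∑ m ∈ range (n+2),
          (psF a b c (n+1) m - (c-a+(n:ℝ))*(c-b+(n:ℝ)) * psF a b c n m) = 0 := by
        rw [Finset.sum_congr rfl (fun m hm => ps_cert a b c n (by omega) m
          (by simp only [Finset.mem_range] at hm; omega))]
        rw [Finset.sum_range_sub (psH a b c n)]
        rw [psH_beyond a b c n (n+2) (by omega), psH_zero]
        ring
      rw [Finset.sum_sub_distrib, ← Finset.mul_sum, sub_eq_zero] at key
      have hlast : psF a b c n (n+1) = 0 := by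
        simp [psF, Nat.choose_succ_self]
      rw [key, Finset.sum_range_succ, hlast, add_zero, ih,
          poch_succ (c-a) n, poch_succ (c-b) n]
      ring


/-- choose with integer index, 0 out of range -/
noncomputable def cc (N : ℕ) (i : ℤ) : ℝ := if 0 ≤ i then (N.choose i.toNat : ℝ) else 0

lemma cc_pascal (N : ℕ) (i : ℤ) : cc (N+1) i = cc N i + cc N (i-1) := by
  rcases lt_trichotomy i 0 with h | h | h
  · rw [cc, cc, cc, if_neg (by omega), if_neg (by omega), if_neg (by omega)]; ring
  · subst h
    rw [cc, cc, cc, if_pos le_rfl, if_pos le_rfl, if_neg (by omega)]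
    simp
  · obtain ⟨k, rfl⟩ : ∃ k : ℕ, i = (k:ℤ)+1 := ⟨(i-1).toNat, by omega⟩
    rw [cc, cc, cc, if_pos (by omega), if_pos (by omega), if_pos (by omega)]
    have h1 : ((k:ℤ)+1).toNat = k+1 := by omega
    have h2 : ((k:ℤ)+1-1).toNat = k := by omega
    rw [h1, h2, Nat.choose_succ_succ]
    push_cast; ring

lemma cc_pascal2 (N : ℕ) (i : ℤ) : cc (N+2) i = cc N i + 2*cc N (i-1) + cc N (i-2) := by
  rw [show N+2 = N+1+1 from rfl, cc_pascal, cc_pascal, cc_pascal,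
    show i-1-1 = i-2 from by ring]
  ring

/-- the coefficient C(2s, s-j) - C(2s, s+j+1) -/
noncomputable def dd (s j : ℕ) : ℝ := cc (2*s) ((s:ℤ)-j) - cc (2*s) ((s:ℤ)+j+1)

lemma dd_of_gt {s j : ℕ} (h : s < j) : dd s j = 0 := by
  rw [dd, cc, cc, if_neg (by omega), if_pos (by omega)]
  rw [Nat.choose_eq_zero_of_lt (by omega)]
  simp

lemma dd_rec (s j : ℕ) : dd (s+1) (j+1) = dd s j + 2*dd s (j+1) + dd s (j+2) := by
  have e1 : (((s+1):ℕ):ℤ) - ((j+1):ℕ) = ((s:ℤ)-j) := by push_cast; ring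
  have e2 : (((s+1):ℕ):ℤ) + ((j+1):ℕ) + 1 = ((s:ℤ)+j+1)+2 := by push_cast; ring
  rw [dd, show 2*(s+1) = 2*s+2 from by ring, e1, e2, cc_pascal2, cc_pascal2]
  simp only [dd]
  push_cast
  ring_nf
lemma dd_rec0 (s : ℕ) : dd (s+1) 0 = dd s 0 + dd s 1 := by
  have e1 : (((s+1):ℕ):ℤ) - ((0:ℕ):ℤ) = ((s:ℤ)-1)+2 := by push_cast; ring
  have e2 : (((s+1):ℕ):ℤ) + ((0:ℕ):ℤ) + 1 = ((s:ℤ))+2 := by push_cast; ring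
  rw [dd, e1, e2, show 2*(s+1) = 2*s+2 from by ring, cc_pascal2, cc_pascal2]
  simp only [dd]
  push_cast
  ring_nf

lemma dd_zero_zero : dd 0 0 = 1 := by
  norm_num [dd, cc]

lemma cos_step (A θ : ℝ) : 4*(1 - Real.cos θ^2) * Real.cos A
    = 2*Real.cos A - Real.cos (A + 2*θ) - Real.cos (A - 2*θ) := by
  rw [Real.cos_add, Real.cos_sub, Real.cos_two_mul]; ring

lemma trigA (θ : ℝ) (s N : ℕ) (h : s ≤ N) :
    Real.cos θ * (1 - Real.cos θ^2)^s * 4^s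
      = ∑ j ∈ range (N+1), (-1:ℝ)^j * dd s j * Real.cos ((2*j+1:ℝ)*θ) := by
  induction s generalizing N with
  | zero =>
    rw [Finset.sum_range_succ']
    have hz : ∀ j ∈ range N, (-1:ℝ)^(j+1) * dd 0 (j+1) * Real.cos ((2*(j+1:ℕ)+1:ℝ)*θ) = 0 := by
      intro j _
      rw [dd_of_gt (by omega)]; ring
    rw [Finset.sum_congr rfl hz, Finset.sum_const_zero, dd_zero_zero]
    norm_num
  | succ s ih =>
    have hN : s ≤ N := by omega
    have key : Real.cos θ * (1 - Real.cos θ^2)^(s+1) * 4^(s+1)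
        = ∑ j ∈ range (N+1), (-1:ℝ)^j * dd s j *
            (4*(1 - Real.cos θ^2) * Real.cos ((2*j+1:ℝ)*θ)) := by
      have e0 : Real.cos θ * (1 - Real.cos θ^2)^(s+1) * 4^(s+1)
          = (4*(1 - Real.cos θ^2)) * (Real.cos θ * (1 - Real.cos θ^2)^s * 4^s) := by ring
      rw [e0, ih N hN, Finset.mul_sum]
      apply Finset.sum_congr rfl
      intro j _
      ring
    rw [key]
    -- expand pointwise
    have pt : ∀ j ∈ range (N+1), (-1:ℝ)^j * dd s j *
          (4*(1 - Real.cos θ^2) * Real.cos ((2*j+1:ℝ)*θ))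
        = (2*((-1:ℝ)^j * dd s j * Real.cos ((2*j+1:ℝ)*θ))
            - ((-1:ℝ)^j * dd s j * Real.cos ((2*(j+1:ℕ)+1:ℝ)*θ)))
            - (-1:ℝ)^j * dd s j * Real.cos ((2*(j:ℝ)-1)*θ) := by
      intro j _
      rw [cos_step ((2*(j:ℝ)+1)*θ) θ]
      have e1 : (2*(j:ℝ)+1)*θ + 2*θ = (2*((j:ℕ)+1:ℕ)+1:ℝ)*θ := by push_cast; ring
      have e2 : (2*(j:ℝ)+1)*θ - 2*θ = (2*(j:ℝ)-1)*θ := by ring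
      rw [e1, e2]
      ring
    rw [Finset.sum_congr rfl pt, Finset.sum_sub_distrib, Finset.sum_sub_distrib]
    -- third sum: peel j=0 and shift
    have third : ∑ j ∈ range (N+1), (-1:ℝ)^j * dd s j * Real.cos ((2*(j:ℝ)-1)*θ)
        = (∑ j ∈ range N, (-1:ℝ)^(j+1) * dd s (j+1) * Real.cos ((2*(j:ℝ)+1)*θ))
          + dd s 0 * Real.cos θ := by
      rw [Finset.sum_range_succ']
      congr 1
      · apply Finset.sum_congr rfl
        intro j _
        have : (2*((j+1:ℕ):ℝ)-1) = 2*(j:ℝ)+1 := by push_cast; ring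
        rw [this]
      · have : (2*((0:ℕ):ℝ)-1)*θ = -θ := by push_cast; ring
        rw [this, Real.cos_neg]
        ring
    rw [third]
    have hslt : s < N := by omega
    have hB : ∑ x ∈ range (N+1), 2 * ((-1:ℝ)^x * dd s x * Real.cos ((2*(x:ℝ)+1)*θ))
        = (∑ j ∈ range N, 2 * ((-1:ℝ)^(j+1) * dd s (j+1) * Real.cos ((2*((j+1:ℕ):ℝ)+1)*θ)))
          + 2 * (dd s 0 * Real.cos θ) := by
      rw [Finset.sum_range_succ']
      congr 1
      push_cast
      norm_num
    have hA : ∑ x ∈ range (N+1), (-1:ℝ)^x * dd s x * Real.cos ((2*((x+1:ℕ):ℝ)+1)*θ)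
        = ∑ x ∈ range N, (-1:ℝ)^x * dd s x * Real.cos ((2*((x+1:ℕ):ℝ)+1)*θ) := by
      rw [Finset.sum_range_succ, dd_of_gt hslt]
      ring
    have hW : ∑ j ∈ range N, (-1:ℝ)^(j+1) * dd s (j+2) * Real.cos ((2*((j+1:ℕ):ℝ)+1)*θ)
        = -(∑ j ∈ range N, (-1:ℝ)^(j+1) * dd s (j+1) * Real.cos ((2*(j:ℝ)+1)*θ))
          - dd s 1 * Real.cos θ := by
      have h1 : ∑ j ∈ range (N+1), (-1:ℝ)^(j+1) * dd s (j+1) * Real.cos ((2*(j:ℝ)+1)*θ)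
          = (∑ j ∈ range N, (-1:ℝ)^((j+1)+1) * dd s ((j+1)+1) * Real.cos ((2*((j+1:ℕ):ℝ)+1)*θ))
            + (-1:ℝ)^(0+1) * dd s (0+1) * Real.cos ((2*((0:ℕ):ℝ)+1)*θ) := Finset.sum_range_succ' _ _
      have h2 : ∑ j ∈ range (N+1), (-1:ℝ)^(j+1) * dd s (j+1) * Real.cos ((2*(j:ℝ)+1)*θ)
          = (∑ j ∈ range N, (-1:ℝ)^(j+1) * dd s (j+1) * Real.cos ((2*(j:ℝ)+1)*θ))
            + (-1:ℝ)^(N+1) * dd s (N+1) * Real.cos ((2*(N:ℝ)+1)*θ) := Finset.sum_range_succ _ _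
      rw [dd_of_gt (show s < N+1 by omega)] at h2
      have h3 : ∀ j ∈ range N, (-1:ℝ)^((j+1)+1) * dd s ((j+1)+1) * Real.cos ((2*((j+1:ℕ):ℝ)+1)*θ)
          = -((-1:ℝ)^(j+1) * dd s (j+2) * Real.cos ((2*((j+1:ℕ):ℝ)+1)*θ)) := by
        intro j _; ring_nf
      rw [Finset.sum_congr rfl h3, Finset.sum_neg_distrib] at h1
      have := h1.symm.trans h2
      norm_num at this
      push_cast at this ⊢
      linarith [this]
    have hT : ∑ j ∈ range (N+1), (-1:ℝ)^j * dd (s+1) j * Real.cos ((2*(j:ℝ)+1)*θ)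
        = ((∑ j ∈ range N, (2 * ((-1:ℝ)^(j+1) * dd s (j+1) * Real.cos ((2*((j+1:ℕ):ℝ)+1)*θ))
              - (-1:ℝ)^j * dd s j * Real.cos ((2*((j+1:ℕ):ℝ)+1)*θ)))
            + ∑ j ∈ range N, (-1:ℝ)^(j+1) * dd s (j+2) * Real.cos ((2*((j+1:ℕ):ℝ)+1)*θ))
          + (dd s 0 + dd s 1) * Real.cos θ := by
      rw [Finset.sum_range_succ', ← Finset.sum_add_distrib]
      congr 1
      · apply Finset.sum_congr rfl
        intro j _
        rw [dd_rec]
        ring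
      · rw [dd_rec0]
        push_cast
        norm_num
    rw [hB, hA, hT, hW, Finset.sum_sub_distrib]
    ring

lemma fact_poch (a b : ℕ) : (((a+b).factorial : ℕ) : ℝ) = (a.factorial : ℝ) * poch ((a:ℝ)+1) b := by
  induction b with
  | zero => simp [poch_zero]
  | succ b ih =>
    rw [show a+(b+1) = (a+b)+1 from rfl, Nat.factorial_succ, poch_succ]
    push_cast
    push_cast at ih
    rw [ih]; ring

lemma poch_dup (z : ℝ) (m : ℕ) : poch z (2*m) = 4^m * poch (z/2) m * poch ((z+1)/2) m := by
  induction m with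
  | zero => simp [poch_zero]
  | succ m ih =>
    rw [show 2*(m+1) = (2*m)+1+1 from by ring, poch_succ, poch_succ, ih,
      poch_succ (z/2), poch_succ ((z+1)/2)]
    push_cast; ring

lemma fact_cast_ne {m : ℕ} : ((m.factorial : ℕ) : ℝ) ≠ 0 := by
  exact_mod_cast m.factorial_ne_zero

lemma choose_cast {n m : ℕ} (h : m ≤ n) :
    (n.choose m : ℝ) = (n.factorial : ℝ) / ((m.factorial : ℝ) * ((n-m).factorial : ℝ)) := by
  rw [eq_div_iff (mul_ne_zero fact_cast_ne fact_cast_ne)]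
  rw [← mul_assoc]
  exact_mod_cast congrArg (Nat.cast : ℕ → ℝ) (Nat.choose_mul_factorial_mul_factorial h)

lemma dd_eval (j m : ℕ) : dd (j+m) j
    = ((2*j+2*m).choose m : ℝ) - ((2*j+2*m).choose (2*j+m+1) : ℝ) := by
  rw [dd, cc, cc, if_pos (by omega), if_pos (by omega)]
  have h1 : (((j+m:ℕ):ℤ) - (j:ℕ)).toNat = m := by omega
  have h2 : (((j+m:ℕ):ℤ) + (j:ℕ) + 1).toNat = 2*j+m+1 := by omega
  rw [h1, h2, show 2*(j+m) = 2*j+2*m from by ring]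

lemma choose_top (j m : ℕ) :
    ((2*j+2*m).choose (2*j+m+1) : ℝ) * ((2*j+m+1).factorial : ℝ) * (m.factorial : ℝ)
      = ((2*j+2*m).factorial : ℝ) * m := by
  cases m with
  | zero => rw [Nat.choose_eq_zero_of_lt (by omega)]; norm_num
  | succ m' =>
    have h := Nat.choose_mul_factorial_mul_factorial (show 2*j+m'+1+1 ≤ 2*j+2*(m'+1) by omega)
    rw [show 2*j+2*(m'+1) - (2*j+m'+1+1) = m' from by omega] at h
    have h' : ((2*j+2*(m'+1)).choose (2*j+m'+1+1) : ℝ) * ((2*j+m'+1+1).factorial : ℝ)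
        * ((m').factorial : ℝ) = ((2*j+2*(m'+1)).factorial : ℝ) := by exact_mod_cast congrArg (Nat.cast : ℕ → ℝ) h
    rw [show 2*j+2*(m'+1) = 2*j+2*m'+2 from by ring] at h' ⊢
    rw [show 2*j+(m'+1)+1 = 2*j+m'+1+1 from by ring]
    rw [Nat.factorial_succ m']
    push_cast
    linear_combination ((m':ℝ)+1) * h'

lemma dd_val (j m : ℕ) : dd (j+m) j
    = 4^m * poch ((j:ℝ)+1/2) m * poch ((j:ℝ)+1) m / ((m.factorial : ℝ) * poch (2*(j:ℝ)+2) m) := by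
  have hQpos : 0 < poch (2*(j:ℝ)+2) m := poch_pos (by positivity) m
  have k1 : ((2*j+2*m).choose m : ℝ) * (m.factorial:ℝ) * ((2*j+m).factorial:ℝ)
      = ((2*j+2*m).factorial : ℝ) := by
    have h := Nat.choose_mul_factorial_mul_factorial (show m ≤ 2*j+2*m by omega)
    rw [show 2*j+2*m - m = 2*j+m from by omega] at h
    exact_mod_cast congrArg (Nat.cast : ℕ → ℝ) h
  have k2 := choose_top j m
  -- expansions
  have e1 : ((2*j+2*m).factorial : ℝ) = ((2*j).factorial : ℝ) * (4^m * poch ((j:ℝ)+1/2) m * poch ((j:ℝ)+1) m) := by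
    have := fact_poch (2*j) (2*m)
    rw [this, poch_dup]
    rw [show ((2*j:ℕ):ℝ)+1 = 2*(j:ℝ)+1 from by push_cast; ring] at *
    rw [show (2*(j:ℝ)+1)/2 = (j:ℝ)+1/2 from by ring, show (2*(j:ℝ)+1+1)/2 = (j:ℝ)+1 from by ring]
    try push_cast
    try ring
  have e2 : ((2*j+m+1).factorial : ℝ) = ((2*j).factorial : ℝ) * (2*(j:ℝ)+1) * poch (2*(j:ℝ)+2) m := by
    have h := fact_poch (2*j+1) m
    rw [show 2*j+1+m = 2*j+m+1 from by ring] at h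
    rw [h, Nat.factorial_succ]
    rw [show ((2*j+1:ℕ):ℝ)+1 = 2*(j:ℝ)+2 from by push_cast; ring]
    push_cast
    ring
  have e3 : ((2*j+m).factorial : ℝ) = ((2*j).factorial : ℝ) * poch (2*(j:ℝ)+1) m := by
    have h := fact_poch (2*j) m
    rw [show 2*j+m = 2*j+m from rfl] at h
    rw [h, show ((2*j:ℕ):ℝ)+1 = 2*(j:ℝ)+1 from by push_cast; ring]
  rw [dd_eval, eq_div_iff (by positivity)]
  -- goal: (C1 - C2) * (m! * poch (2j+2) m) = 4^m P2 P1
  have hC : ((2*j).factorial : ℝ) * (2*(j:ℝ)+1) ≠ 0 := by positivity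
  apply mul_right_cancel₀ hC
  rw [e1] at k1
  rw [e2, e1] at k2
  -- k1 : C1 * m! * ((2j+m)!) = (2j)! * (4^m P2 P1); k2 : C2 * ((2j)!(2j+1) Q) * m! = (2j)!(4^m P2 P1) * m
  rw [e3] at k1
  have e4 : (2*(j:ℝ)+1) * poch (2*(j:ℝ)+2) m = poch (2*(j:ℝ)+1) m * (2*(j:ℝ)+1+m) := by
    have h1 := poch_succ_left (2*(j:ℝ)+1) m
    have h2 := poch_succ (2*(j:ℝ)+1) m
    rw [h1] at h2
    rw [show (2*(j:ℝ)+1+1) = 2*(j:ℝ)+2 from by ring] at h2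
    exact h2
  linear_combination (2*(j:ℝ)+1+(m:ℝ)) * k1 - k2
    + (((2*j+2*m).choose m : ℝ) * (m.factorial : ℝ) * ((2*j).factorial : ℝ)) * e4

lemma factF (j : ℕ) : ∀ k : ℕ,
    ((j+k).factorial : ℝ) * ((2*j+2*k+2).factorial : ℝ) * ((2*j+1).factorial : ℝ)
        * ((2*j+k+1).factorial : ℝ) * ((j+1).factorial : ℝ)
      = (j.factorial : ℝ) * ((2*j+k+1).factorial : ℝ) * ((2*j+2*k+1).factorial : ℝ)
        * ((j+k+1).factorial : ℝ) * ((2*j+2).factorial : ℝ) := by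
  intro k
  induction k with
  | zero =>
    norm_num
    rw [show 2*j+0+1 = 2*j+1 from by ring, show 2*j+2*0+1 = 2*j+1 from by ring,
        show 2*j+2*0+2 = 2*j+2 from by ring, show j+0+1 = j+1 from by ring]
    ring
  | succ k ih =>
    rw [show j+(k+1) = (j+k)+1 from by ring, Nat.factorial_succ (j+k),
        show 2*j+2*(k+1)+2 = (2*j+2*k+3)+1 from by ring, Nat.factorial_succ (2*j+2*k+3),
        show 2*j+2*k+3 = (2*j+2*k+2)+1 from by ring, Nat.factorial_succ (2*j+2*k+2),
        show 2*j+(k+1)+1 = (2*j+k+1)+1 from by ring, Nat.factorial_succ (2*j+k+1),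
        show 2*j+2*(k+1)+1 = ((2*j+2*k+2))+1 from by ring,
        Nat.factorial_succ (2*j+2*k+2), Nat.factorial_succ (j+k+1)]
    have hsplit : (2*j+2*k+2).factorial = (2*j+2*k+2) * (2*j+2*k+1).factorial := by
      rw [show 2*j+2*k+2 = (2*j+2*k+1)+1 from by ring, Nat.factorial_succ]
    rw [hsplit] at ih ⊢
    push_cast
    push_cast at ih
    linear_combination (((j:ℝ)+k+1) * (2*(j:ℝ)+2*k+3) * (2*(j:ℝ)+2*k+4) * (2*(j:ℝ)+k+2)) * ih

lemma pochE3 (j k : ℕ) : ((j+k).factorial : ℝ) * poch ((j:ℝ)+3/2) k * 4^k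
    = (j.factorial : ℝ) * poch (2*(j:ℝ)+2) k * poch (2*(j:ℝ)+(k:ℝ)+2) k := by
  have p1 : poch (2*(j:ℝ)+2) k = ((2*j+k+1).factorial : ℝ) / ((2*j+1).factorial : ℝ) := by
    rw [eq_div_iff fact_cast_ne]
    have h := fact_poch (2*j+1) k
    rw [show 2*j+1+k = 2*j+k+1 from by ring] at h
    rw [h, show ((2*j+1:ℕ):ℝ)+1 = 2*(j:ℝ)+2 from by push_cast; ring]
    ring
  have p2 : poch (2*(j:ℝ)+(k:ℝ)+2) k = ((2*j+2*k+1).factorial : ℝ) / ((2*j+k+1).factorial : ℝ) := by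
    rw [eq_div_iff fact_cast_ne]
    have h := fact_poch (2*j+k+1) k
    rw [show 2*j+k+1+k = 2*j+2*k+1 from by ring] at h
    rw [h, show ((2*j+k+1:ℕ):ℝ)+1 = 2*(j:ℝ)+(k:ℝ)+2 from by push_cast; ring]
    ring
  have p3 : poch ((j:ℝ)+3/2) k
      = ((2*j+2*k+2).factorial : ℝ) * ((j+1).factorial : ℝ)
        / (((2*j+2).factorial : ℝ) * ((j+k+1).factorial : ℝ) * 4^k) := by
    have hdup := poch_dup (2*(j:ℝ)+3) k
    rw [show (2*(j:ℝ)+3)/2 = (j:ℝ)+3/2 from by ring,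
        show (2*(j:ℝ)+3+1)/2 = (j:ℝ)+2 from by ring] at hdup
    have h3 := fact_poch (2*j+2) (2*k)
    rw [show 2*j+2+2*k = 2*j+2*k+2 from by ring,
        show ((2*j+2:ℕ):ℝ)+1 = 2*(j:ℝ)+3 from by push_cast; ring] at h3
    have h4 := fact_poch (j+1) k
    rw [show j+1+k = j+k+1 from by ring,
        show ((j+1:ℕ):ℝ)+1 = (j:ℝ)+2 from by push_cast; ring] at h4
    rw [eq_div_iff (by positivity)]
    have h5 : ((2*j+2*k+2).factorial : ℝ) * ((j+1).factorial : ℝ)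
        = ((2*j+2).factorial : ℝ) * (4^k * poch ((j:ℝ)+3/2) k * poch ((j:ℝ)+2) k)
          * ((j+1).factorial : ℝ) := by rw [h3, hdup]
    linear_combination (poch ((j:ℝ)+3/2) k * (((2*j+2).factorial : ℕ) : ℝ) * 4^k) * h4 - h5
  rw [p1, p2, p3]
  have f1 : ((2*j+1).factorial : ℝ) ≠ 0 := fact_cast_ne
  have f2 : ((2*j+k+1).factorial : ℝ) ≠ 0 := fact_cast_ne
  have f3 : ((2*j+2).factorial : ℝ) ≠ 0 := fact_cast_ne
  have f4 : ((j+k+1).factorial : ℝ) ≠ 0 := fact_cast_ne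
  field_simp
  apply mul_right_cancel₀ f2
  linear_combination factF j k

set_option maxHeartbeats 2000000 in
lemma claimB_term (l : ℝ) (hl : 0 < l + 1/2) (j m p : ℕ) :
      (-1:ℝ)^(j+m) * (((j+(m+p)).choose (j+m) : ℕ) : ℝ)
          * (poch (l+((j+(m+p):ℕ):ℝ)+1) (j+m) / poch (l+1/2) (j+m))
          * ((-1:ℝ)^j * dd (j+m) j / 4^(j+m))
        = ((((j+(m+p)).factorial : ℕ) : ℝ) * poch (l+((j+(m+p):ℕ):ℝ)+1) j * (-1:ℝ)^(m+p) /
            (((j.factorial : ℕ) : ℝ) * 4^j * poch (l+1/2) j * (((m+p).factorial : ℕ) : ℝ)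
              * poch (2*(j:ℝ)+2) (m+p) * poch (l+1/2+(j:ℝ)) (m+p)))
          * psF ((j:ℝ)+1/2) (l+((j+(m+p):ℕ):ℝ)+1+(j:ℝ)) (2*(j:ℝ)+2) (m+p) m := by
    simp only [psF]
    rw [dd_val j m]
    rw [choose_cast (show j+m ≤ j+(m+p) by omega), show (j+(m+p)) - (j+m) = p from by omega]
    rw [choose_cast (show m ≤ m+p by omega), show (m+p) - m = p from by omega]
    rw [poch_add (l+((j+(m+p):ℕ):ℝ)+1) j m]
    rw [poch_add (l+1/2) j m]
    rw [fact_poch j m]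
    rw [poch_add (l+1/2+(j:ℝ)) m p]
    rw [poch_add (2*(j:ℝ)+2) m p]
    rw [poch_reflect p (2*(j:ℝ)+2 - ((j:ℝ)+1/2) - (l+((j+(m+p):ℕ):ℝ)+1+(j:ℝ)))]
    rw [show -(2*(j:ℝ)+2 - ((j:ℝ)+1/2) - (l+((j+(m+p):ℕ):ℝ)+1+(j:ℝ))) - (p:ℝ) + 1
        = l+1/2+(j:ℝ)+(m:ℝ) from by push_cast; ring]
    have n1 : (0:ℝ) < poch (l+1/2) j := poch_pos hl j
    have n2 : (0:ℝ) < poch (l+1/2+(j:ℝ)) m := poch_pos (by positivity) m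
    have n3 : (0:ℝ) < poch (l+1/2+(j:ℝ)+(m:ℝ)) p := poch_pos (by positivity) p
    have n4 : (0:ℝ) < poch (2*(j:ℝ)+2) m := poch_pos (by positivity) m
    have n5 : (0:ℝ) < poch (2*(j:ℝ)+2+(m:ℝ)) p := poch_pos (by positivity) p
    have n10 : (0:ℝ) < poch ((j:ℝ)+1) m := poch_pos (by positivity) m
    simp only [div_mul_eq_mul_div, mul_div_assoc', div_div]
    rw [div_eq_div_iff (by positivity) (by positivity)]
    push_cast
    ring_nf
    rw [show ((-1:ℝ))^(j*2) = 1 from by rw [mul_comm j 2, pow_mul]; norm_num,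
        show ((-1:ℝ))^(p*2) = 1 from by rw [mul_comm p 2, pow_mul]; norm_num]
    ring

/-- Coefficient b_s^r(lambda). -/
noncomputable def bcoef (r s : ℕ) (l : ℝ) : ℝ :=
  poch (2 * r + 2 - s) s * poch l s * poch (l + r + 1) (r - s) /
    (4 ^ r * poch (l + 1 / 2) r * Nat.factorial s)

set_option maxHeartbeats 2000000 in
lemma claimB (l : ℝ) (hl : 0 < l + 1/2) (j k : ℕ) :
    ∑ m ∈ range (k+1),
        (-1:ℝ)^(j+m) * (((j+k).choose (j+m) : ℕ) : ℝ)
          * (poch (l+((j+k:ℕ):ℝ)+1) (j+m) / poch (l+1/2) (j+m))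
          * ((-1:ℝ)^j * dd (j+m) j / 4^(j+m))
      = bcoef (j+k) k l := by
  have hterm : ∀ m ∈ range (k+1),
      (-1:ℝ)^(j+m) * (((j+k).choose (j+m) : ℕ) : ℝ)
          * (poch (l+((j+k:ℕ):ℝ)+1) (j+m) / poch (l+1/2) (j+m))
          * ((-1:ℝ)^j * dd (j+m) j / 4^(j+m))
        = ((((j+k).factorial : ℕ) : ℝ) * poch (l+((j+k:ℕ):ℝ)+1) j * (-1:ℝ)^k /
            (((j.factorial : ℕ) : ℝ) * 4^j * poch (l+1/2) j * ((k.factorial : ℕ) : ℝ)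
              * poch (2*(j:ℝ)+2) k * poch (l+1/2+(j:ℝ)) k))
          * psF ((j:ℝ)+1/2) (l+((j+k:ℕ):ℝ)+1+(j:ℝ)) (2*(j:ℝ)+2) k m := by
    intro m hm
    simp only [Finset.mem_range] at hm
    obtain ⟨p, rfl⟩ : ∃ p, k = m+p := ⟨k-m, by omega⟩
    exact claimB_term l hl j m p
  rw [Finset.sum_congr rfl hterm, ← Finset.mul_sum, ps_sum]
  rw [show 2*(j:ℝ)+2 - ((j:ℝ)+1/2) = (j:ℝ)+3/2 from by ring]
  rw [poch_reflect k (2*(j:ℝ)+2 - (l+((j+k:ℕ):ℝ)+1+(j:ℝ)))]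
  rw [show -(2*(j:ℝ)+2 - (l+((j+k:ℕ):ℝ)+1+(j:ℝ))) - (k:ℝ) + 1 = l from by push_cast; ring]
  simp only [bcoef]
  rw [show (j+k) - k = j from by omega]
  rw [show 2*((j+k:ℕ):ℝ)+2-((k:ℕ):ℝ) = 2*(j:ℝ)+(k:ℝ)+2 from by push_cast; ring]
  rw [poch_add (l+1/2) j k]
  have n1 : (0:ℝ) < poch (l+1/2) j := poch_pos hl j
  have n2 : (0:ℝ) < poch (l+1/2+(j:ℝ)) k := poch_pos (by positivity) k
  have n3 : (0:ℝ) < poch (2*(j:ℝ)+2) k := poch_pos (by positivity) k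
  simp only [div_mul_eq_mul_div, mul_div_assoc', div_div]
  rw [div_eq_div_iff (by positivity) (by positivity)]
  push_cast
  ring_nf
  rw [show ((-1:ℝ))^(k*2) = 1 from by rw [mul_comm k 2, pow_mul]; norm_num]
  ring_nf
  have E3 := pochE3 j k
  push_cast at E3
  ring_nf at E3
  linear_combination (poch l k * poch (1+l+(j:ℝ)+(k:ℝ)) j * poch (1/2+l) j
    * poch (1/2+l+(j:ℝ)) k * ((k.factorial : ℕ) : ℝ) * 4^j) * E3

set_option maxHeartbeats 1000000 in
/-- decomposition of the normalized Gegenbauer polynomial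
P_{2r+1}^{(lambda-1/2)} in terms of Chebyshev polynomials of the first kind. -/
theorem stmt8 (r : ℕ) (l : ℝ) (hl : -(1 / 2 : ℝ) < l) (θ : ℝ) :
    Real.cos θ * ∑ s ∈ Finset.range (r + 1), (-1 : ℝ) ^ s * (r.choose s : ℝ) *
        (poch (l + r + 1) s / poch (l + 1 / 2) s) * (1 - Real.cos θ ^ 2) ^ s =
      ∑ s ∈ Finset.range (r + 1), bcoef r s l *
        Real.cos ((2 * r + 1 - 2 * s : ℝ) * θ) := by
  have hl' : (0:ℝ) < l + 1/2 := by linarith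
  rw [Finset.mul_sum]
  have step1 : ∀ s ∈ range (r+1),
      Real.cos θ * ((-1 : ℝ) ^ s * (r.choose s : ℝ) *
          (poch (l + r + 1) s / poch (l + 1 / 2) s) * (1 - Real.cos θ ^ 2) ^ s)
        = ∑ j ∈ range (s+1), (-1 : ℝ) ^ s * (r.choose s : ℝ) *
            (poch (l + r + 1) s / poch (l + 1 / 2) s) *
            ((-1:ℝ)^j * dd s j * Real.cos ((2*j+1:ℝ)*θ)) / 4^s := by
    intro s _
    have ht : Real.cos θ * (1 - Real.cos θ^2)^s
        = (∑ j ∈ range (s+1), (-1:ℝ)^j * dd s j * Real.cos ((2*j+1:ℝ)*θ)) / 4^s := by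
      rw [eq_div_iff (by positivity : ((4:ℝ)^s) ≠ 0)]
      exact trigA θ s s le_rfl
    have e0 : Real.cos θ * ((-1 : ℝ) ^ s * (r.choose s : ℝ) *
          (poch (l + r + 1) s / poch (l + 1 / 2) s) * (1 - Real.cos θ ^ 2) ^ s)
        = (-1 : ℝ) ^ s * (r.choose s : ℝ) * (poch (l + r + 1) s / poch (l + 1 / 2) s)
          * (Real.cos θ * (1 - Real.cos θ ^ 2) ^ s) := by ring
    rw [e0, ht, Finset.sum_div, Finset.mul_sum]
    apply Finset.sum_congr rfl
    intro j _
    ring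
  rw [Finset.sum_congr rfl step1]
  simp only [Finset.range_eq_Ico]
  rw [← Finset.sum_Ico_Ico_comm 0 (r+1) (fun j s => (-1 : ℝ) ^ s * (r.choose s : ℝ) *
      (poch (l + r + 1) s / poch (l + 1 / 2) s) *
      ((-1:ℝ)^j * dd s j * Real.cos ((2*j+1:ℝ)*θ)) / 4^s)]
  rw [← Finset.range_eq_Ico]
  rw [← Finset.sum_range_reflect (fun s => bcoef r s l * Real.cos ((2 * r + 1 - 2 * s : ℝ) * θ)) (r+1)]
  apply Finset.sum_congr rfl
  intro j hj
  simp only [Finset.mem_range] at hj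
  rw [show r+1-1-j = r-j from by omega]
  obtain ⟨k, hk⟩ : ∃ k, r = j+k := ⟨r-j, by omega⟩
  subst hk
  rw [Finset.sum_Ico_eq_sum_range]
  rw [show j+k+1-j = k+1 from by omega]
  rw [show (j+k)-j = k from by omega]
  rw [show (2*((j+k:ℕ):ℝ)+1-2*((k:ℕ):ℝ))*θ = (2*(j:ℝ)+1)*θ from by push_cast; ring]
  have hcb := claimB l hl' j k
  calc ∑ m ∈ range (k+1), (-1 : ℝ) ^ (j+m) * ((j+k).choose (j+m) : ℝ) *
          (poch (l + (j+k:ℕ) + 1) (j+m) / poch (l + 1 / 2) (j+m)) *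
          ((-1:ℝ)^j * dd (j+m) j * Real.cos ((2*j+1:ℝ)*θ)) / 4^(j+m)
      = ∑ m ∈ range (k+1), ((-1:ℝ)^(j+m) * (((j+k).choose (j+m) : ℕ) : ℝ)
          * (poch (l+((j+k:ℕ):ℝ)+1) (j+m) / poch (l+1/2) (j+m))
          * ((-1:ℝ)^j * dd (j+m) j / 4^(j+m))) * Real.cos ((2*(j:ℝ)+1)*θ) := by
        apply Finset.sum_congr rfl
        intro m _
        ring
    _ = bcoef (j+k) k l * Real.cos ((2*(j:ℝ)+1)*θ) := by rw [← Finset.sum_mul, hcb]
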